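/- arXiv:1607.00187 — 5 statements merged into one kernel-verified Lean document; each statement's English description precedes it below -/
import Mathlib

section
/- Let H be a self-adjoint operator on a Hilbert space, V a bounded symmetric operator, E a real number, and φ a vector with (H + V)φ = Eφ. If P is the spectral projection of H onto a Borel set S with dist(E, S) ≥ d > 0, then ‖Pφ‖ ≤ (‖V‖/d)·‖φ‖. -/
/-! Projecting the eigenvalue equation onto the range of `P` gives
`(H - E) Pφ = -P Vφ`, since `P` commutes with `H`. On the range of `P` the operator `H - E`
is bounded below by `d`, while `P`, an orthogonal projection, has norm at most one; hence
`d ‖Pφ‖ ≤ ‖P Vφ‖ ≤ ‖V‖ ‖φ‖`. -/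

theorem ContinuousLinearMap.norm_apply_le_of_isStarProjection
    {𝕜 E : Type*} [RCLike 𝕜] [NormedAddCommGroup E] [InnerProductSpace 𝕜 E] [CompleteSpace E]
    {P : E →L[𝕜] E} (hP : IsStarProjection P) (x : E) : ‖P x‖ ≤ ‖x‖ :=
  P.le_of_opNorm_le (hP.norm_le P) x |>.trans_eq (one_mul _)

theorem ContinuousLinearMap.apply_sub_smul_eq_neg_of_add_eq_smul
    {R M : Type*} [Ring R] [TopologicalSpace M] [AddCommGroup M] [Module R M]
    {H V P : M →L[R] M} (hPH : H ∘L P = P ∘L H) {c : R} {φ : M} (hφ : H φ + V φ = c • φ) :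
    H (P φ) - c • P φ = -P (V φ) := by
  have hHP : H (P φ) = P (H φ) := congr($hPH φ)
  rw [hHP, eq_sub_of_add_eq hφ, map_sub, map_smul]
  abel

theorem stmt_0_general
    {𝓗 : Type*} [NormedAddCommGroup 𝓗] [InnerProductSpace ℂ 𝓗] [CompleteSpace 𝓗]
    (H V P : 𝓗 →L[ℂ] 𝓗)
    (hP : IsSelfAdjoint P)
    (hPproj : P ∘L P = P) (hPH : H ∘L P = P ∘L H)
    (E : ℝ) (d : ℝ) (hd : 0 < d)
    (hdist : ∀ ψ : 𝓗, d * ‖P ψ‖ ≤ ‖H (P ψ) - (E : ℂ) • (P ψ)‖)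
    (φ : 𝓗) (hφ : H φ + V φ = (E : ℂ) • φ) :
    ‖P φ‖ ≤ (‖V‖ / d) * ‖φ‖ := by
  have hPstar : IsStarProjection P := ⟨hPproj, hP⟩
  have hbound : d * ‖P φ‖ ≤ ‖V‖ * ‖φ‖ :=
    calc d * ‖P φ‖ ≤ ‖H (P φ) - (E : ℂ) • P φ‖ := hdist φ
      _ = ‖P (V φ)‖ := by
        rw [ContinuousLinearMap.apply_sub_smul_eq_neg_of_add_eq_smul hPH hφ, norm_neg]
      _ ≤ ‖V φ‖ := ContinuousLinearMap.norm_apply_le_of_isStarProjection hPstar _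
      _ ≤ ‖V‖ * ‖φ‖ := V.le_opNorm φ
  rw [div_mul_eq_mul_div, le_div_iff₀ hd, mul_comm]
  exact hbound

/-- If `P` is a spectral projection of the self-adjoint operator `H`
onto a Borel set `S` with `dist(E, S) ≥ d > 0` (encoded via: `P` is an orthogonal
projection commuting with `H` such that `‖(H - E)ψ‖ ≥ d‖ψ‖` for all `ψ` in the
range of `P`, which is exactly the spectral-theorem content of the distance
condition), `V` is bounded symmetric, and `(H + V)φ = Eφ`, then
`‖Pφ‖ ≤ (‖V‖/d)‖φ‖`. -/
theorem stmt_0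
    {𝓗 : Type*} [NormedAddCommGroup 𝓗] [InnerProductSpace ℂ 𝓗] [CompleteSpace 𝓗]
    (H V P : 𝓗 →L[ℂ] 𝓗)
    (hH : IsSelfAdjoint H) (hV : IsSelfAdjoint V) (hP : IsSelfAdjoint P)
    (hPproj : P ∘L P = P) (hPH : H ∘L P = P ∘L H)
    (E : ℝ) (d : ℝ) (hd : 0 < d)
    (hdist : ∀ ψ : 𝓗, d * ‖P ψ‖ ≤ ‖H (P ψ) - (E : ℂ) • (P ψ)‖)
    (φ : 𝓗) (hφ : H φ + V φ = (E : ℂ) • φ) :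
    ‖P φ‖ ≤ (‖V‖ / d) * ‖φ‖ :=
  stmt_0_general H V P hP hPproj hPH E d hd hdist φ hφ
end

section
/- Let H be a self-adjoint operator on a Hilbert space, V a bounded symmetric operator, E ∈ ℝ, and φ a unit vector with (H+V)φ = Eφ. Let J ⊂ ℝ be an interval with dist(E, ℝ∖J) ≥ d > 0 and let Q = χ_{J^c}(H). Then ⟨φ, Qφ⟩ ≤ ‖V‖²/d². -/
local notation "⟪" x ", " y "⟫" => @inner ℂ _ _ x y

/-- If `Q = χ_{Jᶜ}(H)` (encoded via: `Q` is an orthogonal projection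
commuting with `H` such that `‖(H - E)ψ‖ ≥ d‖ψ‖` on the range of `Q`, the spectral
content of `dist(E, ℝ∖J) ≥ d`), `V` is bounded symmetric, `φ` is a unit vector with
`(H+V)φ = Eφ`, then `⟨φ, Qφ⟩ ≤ ‖V‖²/d²`. -/
theorem stmt_1
    {𝓗 : Type*} [NormedAddCommGroup 𝓗] [InnerProductSpace ℂ 𝓗] [CompleteSpace 𝓗]
    (H V Q : 𝓗 →L[ℂ] 𝓗)
    (hH : IsSelfAdjoint H) (hV : IsSelfAdjoint V) (hQ : IsSelfAdjoint Q)
    (hQproj : Q ∘L Q = Q) (hQH : H ∘L Q = Q ∘L H)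
    (E : ℝ) (d : ℝ) (hd : 0 < d)
    (hdist : ∀ ψ : 𝓗, d * ‖Q ψ‖ ≤ ‖H (Q ψ) - (E : ℂ) • (Q ψ)‖)
    (φ : 𝓗) (hφnorm : ‖φ‖ = 1) (hφ : H φ + V φ = (E : ℂ) • φ) :
    (⟪φ, Q φ⟫).re ≤ ‖V‖ ^ 2 / d ^ 2 := by
  have hQapp : ∀ x : 𝓗, Q (Q x) = Q x := fun x =>
    congrArg (fun T : 𝓗 →L[ℂ] 𝓗 => T x) hQproj
  have hfold : ∀ x : 𝓗, (⟪x, Q x⟫ : ℂ) = ⟪Q x, Q x⟫ := by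
    intro x
    conv_lhs => rw [← hQapp x]
    rw [← ContinuousLinearMap.adjoint_inner_left, hQ.adjoint_eq]
  -- ⟪φ, Qφ⟫.re = ‖Qφ‖²
  have hinner : (⟪φ, Q φ⟫).re = ‖Q φ‖ ^ 2 := by
    rw [hfold φ]; exact inner_self_eq_norm_sq (𝕜 := ℂ) (Q φ)
  -- ‖Q x‖ ≤ ‖x‖
  have hQnorm : ∀ x : 𝓗, ‖Q x‖ ≤ ‖x‖ := by
    intro x
    rcases le_or_gt ‖Q x‖ 0 with h | h
    · exact h.trans (norm_nonneg x)
    · have h1 : ‖Q x‖ ^ 2 = (⟪x, Q x⟫ : ℂ).re := by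
        rw [hfold x]; exact (inner_self_eq_norm_sq (𝕜 := ℂ) (Q x)).symm
      have h2 : (⟪x, Q x⟫ : ℂ).re ≤ ‖x‖ * ‖Q x‖ := by
        calc (⟪x, Q x⟫ : ℂ).re ≤ ‖(⟪x, Q x⟫ : ℂ)‖ := Complex.re_le_norm _
          _ ≤ ‖x‖ * ‖Q x‖ := norm_inner_le_norm x (Q x)
      have : ‖Q x‖ * ‖Q x‖ ≤ ‖x‖ * ‖Q x‖ := by
        rw [← sq]; rw [h1]; exact h2
      exact le_of_mul_le_mul_right this h
  -- key identity
  have hcomm : H (Q φ) = Q (H φ) := congrArg (fun T : 𝓗 →L[ℂ] 𝓗 => T φ) hQH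
  have hkey : H (Q φ) - (E : ℂ) • (Q φ) = -Q (V φ) := by
    rw [hcomm, ← map_smul, ← map_neg, ← map_sub]
    congr 1
    have hHφ : H φ = (E : ℂ) • φ - V φ := by rw [← hφ]; abel
    rw [hHφ]; abel
  have hbound : d * ‖Q φ‖ ≤ ‖V‖ := by
    calc d * ‖Q φ‖ ≤ ‖H (Q φ) - (E : ℂ) • (Q φ)‖ := hdist φ
      _ = ‖Q (V φ)‖ := by rw [hkey, norm_neg]
      _ ≤ ‖V φ‖ := hQnorm _
      _ ≤ ‖V‖ * ‖φ‖ := V.le_opNorm φ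
      _ = ‖V‖ := by rw [hφnorm, mul_one]
  have hQφ : ‖Q φ‖ ≤ ‖V‖ / d := by
    rw [le_div_iff₀ hd]; linarith [hbound]
  rw [hinner, show ‖V‖ ^ 2 / d ^ 2 = (‖V‖ / d) ^ 2 by rw [div_pow]]
  exact pow_le_pow_left₀ (norm_nonneg _) hQφ 2
end

section
/- Let P and Q be orthogonal projections on a Hilbert space with P of finite rank, and let W be a bounded positive symmetric operator satisfying Q W Q ≥ C₂ Q for some C₂ > 0. Then C₂ · Tr(P Q) ≤ Tr(P W) + (1 + ‖W‖) · Tr(P (I - Q)) + Tr(P W²). -/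
local notation "⟪" x ", " y "⟫" => @inner ℂ _ _ x y

lemma re_eq' {z : ℂ} : RCLike.re z = z.re := rfl

lemma key_pointwise
    {𝓗 : Type*} [NormedAddCommGroup 𝓗] [InnerProductSpace ℂ 𝓗] [CompleteSpace 𝓗]
    (Q W : 𝓗 →L[ℂ] 𝓗)
    (hQ : IsSelfAdjoint Q) (hQproj : Q ∘L Q = Q)
    (hW : IsSelfAdjoint W)
    (C₂ : ℝ)
    (hUCP : ∀ x : 𝓗, C₂ * (⟪x, Q x⟫).re ≤ (⟪Q x, W (Q x)⟫).re)
    (x : 𝓗) :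
    C₂ * (⟪x, Q x⟫).re ≤ (⟪x, W x⟫).re + (1 + ‖W‖) * (⟪x, x - Q x⟫).re
      + (⟪x, W (W x)⟫).re := by
  have hWs : ∀ a b : 𝓗, ⟪W a, b⟫ = ⟪a, W b⟫ := fun a b => hW.isSymmetric a b
  have hQs : ∀ a b : 𝓗, ⟪Q a, b⟫ = ⟪a, Q b⟫ := fun a b => hQ.isSymmetric a b
  set u := x - Q x with hu
  have hQQ : Q (Q x) = Q x := by
    have := congrArg (fun T : 𝓗 →L[ℂ] 𝓗 => T x) hQproj
    simpa using this
  have hqu : ⟪Q x, u⟫ = 0 := by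
    rw [hu, inner_sub_right, hQs x x, hQs x (Q x), hQQ, sub_self]
  have hxu : (⟪x, u⟫).re = ‖u‖ ^ 2 := by
    have hx : x = Q x + u := by rw [hu]; abel
    rw [hx, inner_add_left, hqu, zero_add, ← re_eq']
    exact inner_self_eq_norm_sq u
  have hWW : (⟪x, W (W x)⟫).re = ‖W x‖ ^ 2 := by
    rw [← hWs x (W x), ← re_eq']
    exact inner_self_eq_norm_sq (W x)
  have hx : Q x = x - u := by rw [hu]; abel
  have expand : ⟪Q x, W (Q x)⟫ = ⟪x, W x⟫ - ⟪W x, u⟫ - ⟪u, W x⟫ + ⟪u, W u⟫ := by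
    rw [hx, map_sub, inner_sub_left, inner_sub_right, inner_sub_right, hWs x u]
    ring
  have hre : (⟪Q x, W (Q x)⟫).re
      = (⟪x, W x⟫).re - 2 * (⟪W x, u⟫).re + (⟪u, W u⟫).re := by
    rw [expand]
    have h2 : (⟪u, W x⟫).re = (⟪W x, u⟫).re := by
      rw [← re_eq', ← re_eq']; exact inner_re_symm u (W x)
    simp only [Complex.add_re, Complex.sub_re, h2]; ring
  have h1 : -(⟪W x, u⟫).re ≤ ‖W x‖ * ‖u‖ := by
    have := re_inner_le_norm (𝕜 := ℂ) (W x) (-u)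
    rw [inner_neg_right] at this
    simpa [re_eq'] using this
  have h2 : (⟪u, W u⟫).re ≤ ‖W‖ * ‖u‖ ^ 2 := by
    have h3 : (⟪u, W u⟫).re ≤ ‖u‖ * ‖W u‖ := by
      have := re_inner_le_norm (𝕜 := ℂ) u (W u)
      simpa [re_eq'] using this
    have h4 : ‖W u‖ ≤ ‖W‖ * ‖u‖ := W.le_opNorm u
    nlinarith [norm_nonneg u, norm_nonneg (W u)]
  have hsq : 2 * (‖W x‖ * ‖u‖) ≤ ‖W x‖ ^ 2 + ‖u‖ ^ 2 := by nlinarith [sq_nonneg (‖W x‖ - ‖u‖)]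
  have := hUCP x
  rw [hre] at this
  rw [hxu, hWW]
  nlinarith [norm_nonneg u]

/-- For a finite-rank orthogonal projection `P` (given by an
orthonormal family `φ` spanning its range, traces against `P` being
`Tr(P X) = Σ_k ⟨φ_k, X φ_k⟩`), an orthogonal projection `Q`, and a bounded
positive symmetric `W` with `Q W Q ≥ C₂ Q`:
`C₂ Tr(P Q) ≤ Tr(P W) + (1 + ‖W‖) Tr(P (I - Q)) + Tr(P W²)`. -/
theorem stmt_3
    {𝓗 : Type*} [NormedAddCommGroup 𝓗] [InnerProductSpace ℂ 𝓗] [CompleteSpace 𝓗]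
    (n : ℕ) (φ : Fin n → 𝓗) (hφ : Orthonormal ℂ φ)
    (P Q W : 𝓗 →L[ℂ] 𝓗)
    (hP : IsSelfAdjoint P) (hPproj : P ∘L P = P)
    (hPeq : ∀ x : 𝓗, P x = ∑ k, ⟪φ k, x⟫ • φ k)
    (hQ : IsSelfAdjoint Q) (hQproj : Q ∘L Q = Q)
    (hW : IsSelfAdjoint W) (hWpos : ∀ x : 𝓗, 0 ≤ (⟪x, W x⟫).re)
    (C₂ : ℝ) (hC₂ : 0 < C₂)
    (hUCP : ∀ x : 𝓗, C₂ * (⟪x, Q x⟫).re ≤ (⟪Q x, W (Q x)⟫).re) :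
    C₂ * (∑ k, ⟪φ k, Q (φ k)⟫).re ≤
      (∑ k, ⟪φ k, W (φ k)⟫).re
      + (1 + ‖W‖) * (∑ k, ⟪φ k, (φ k) - Q (φ k)⟫).re
      + (∑ k, ⟪φ k, W (W (φ k))⟫).re := by
  simp only [Complex.re_sum, Finset.mul_sum]
  rw [← Finset.sum_add_distrib, ← Finset.sum_add_distrib]
  exact Finset.sum_le_sum fun k _ =>
    key_pointwise Q W hQ hQproj hW C₂ hUCP (φ k)
end

section
/- Abstract Wegner-type trace bound: Let H be a lower-semibounded self-adjoint operator with purely discrete spectrum, V a bounded symmetric operator, I ⊂ J ⊂ ℝ intervals, and W a bounded positive symmetric operator with χ_J(H) W χ_J(H) ≥ C₂ χ_J(H) for some C₂ > 0. If ‖V‖ < dist(I, J^c)·√(C₂/(C₂ + 1 + ‖W‖)), then Tr(χ_I(H+V)) ≤ C₃ · Tr(χ_I(H+V)(W + W²)), where C₃ = dist(I,J^c)² / (C₂·dist(I,J^c)² − ‖V‖²·(C₂ + 1 + ‖W‖)). -/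
/-!
Let `φ` be a normalized eigenvector of `H + V` with eigenvalue `E ∈ I`. Since `H` commutes with
`Q = χ_J(H)`, `(H - E)` maps `(1 - Q) φ` to `-(1 - Q) V φ`, so the spectral gap gives
`d ‖(1 - Q) φ‖ ≤ ‖V‖`: the eigenvector lies almost in the range of `Q`. The unique continuation
bound applies to `Q φ`, and expanding `⟪Q φ, W Q φ⟫` around `φ` costs at most
`‖W φ‖² + (1 + ‖W‖) ‖(1 - Q) φ‖²`. Together,
`C₂ - (C₂ + 1 + ‖W‖) ‖V‖² / d² ≤ ⟪φ, (W + W²) φ⟫`, and summing over the eigenvectors gives the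
trace bound.
-/

open RCLike

open scoped InnerProductSpace

theorem Real.sq_mul_lt_of_lt_mul_sqrt_div {v d a c : ℝ} (hv : 0 ≤ v) (hc : 0 < c)
    (h : v < d * √(a / c)) : v ^ 2 * c < d ^ 2 * a := by
  have hac : 0 ≤ a / c := by
    by_contra! hneg
    rw [Real.sqrt_eq_zero_of_nonpos hneg.le, mul_zero] at h
    linarith
  calc v ^ 2 * c < (d * √(a / c)) ^ 2 * c := by gcongr
    _ = d ^ 2 * a := by rw [mul_pow, Real.sq_sqrt hac]; field_simp

section

variable {𝕜 E : Type*} [RCLike 𝕜] [NormedAddCommGroup E] [InnerProductSpace 𝕜 E]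

theorem ContinuousLinearMap.re_inner_apply_self_le {W : E →L[𝕜] E}
    (hW : (W : E →ₗ[𝕜] E).IsSymmetric) (x y : E) :
    re ⟪y, W y⟫_𝕜 ≤ re ⟪x, W x⟫_𝕜 + re ⟪x, W (W x)⟫_𝕜 + (1 + ‖W‖) * ‖x - y‖ ^ 2 := by
  have hsymm : ∀ a b, ⟪W a, b⟫_𝕜 = ⟪a, W b⟫_𝕜 := hW
  set ψ := x - y
  have hexpand : re ⟪y, W y⟫_𝕜 = re ⟪x, W x⟫_𝕜 - 2 * re ⟪ψ, W x⟫_𝕜 + re ⟪ψ, W ψ⟫_𝕜 := by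
    have hswap : re ⟪x, W ψ⟫_𝕜 = re ⟪ψ, W x⟫_𝕜 := by rw [← hsymm x ψ, inner_re_symm]
    rw [show y = x - ψ by simp [ψ], map_sub, inner_sub_left, inner_sub_right, inner_sub_right]
    simp only [map_sub, hswap]
    ring
  have hWx : ‖W x‖ ^ 2 = re ⟪x, W (W x)⟫_𝕜 := by
    rw [← hsymm x (W x), ← inner_self_eq_norm_sq (𝕜 := 𝕜)]
  have hcross : -(2 * re ⟪ψ, W x⟫_𝕜) ≤ ‖ψ‖ ^ 2 + ‖W x‖ ^ 2 := by
    have := (neg_le_abs _).trans (abs_re_le_norm ⟪ψ, W x⟫_𝕜)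
    nlinarith [norm_inner_le_norm (𝕜 := 𝕜) ψ (W x), sq_nonneg (‖ψ‖ - ‖W x‖)]
  have hdiag : re ⟪ψ, W ψ⟫_𝕜 ≤ ‖W‖ * ‖ψ‖ ^ 2 :=
    calc re ⟪ψ, W ψ⟫_𝕜 ≤ ‖ψ‖ * ‖W ψ‖ := re_inner_le_norm _ _
      _ ≤ ‖ψ‖ * (‖W‖ * ‖ψ‖) := by gcongr; exact W.le_opNorm ψ
      _ = ‖W‖ * ‖ψ‖ ^ 2 := by ring
  linarith

namespace IsStarProjection

variable [CompleteSpace E] {P : E →L[𝕜] E}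

theorem norm_sub_apply_le (hP : IsStarProjection P) (x : E) : ‖x - P x‖ ≤ ‖x‖ := by
  simpa using ((1 - P).le_opNorm x).trans
    (mul_le_of_le_one_left (norm_nonneg x) (hP.one_sub.norm_le _))

theorem norm_apply_sq_add_norm_sub_apply_sq (hP : IsStarProjection P) (x : E) :
    ‖P x‖ ^ 2 + ‖x - P x‖ ^ 2 = ‖x‖ ^ 2 := by
  obtain ⟨K, _, rfl⟩ := isStarProjection_iff_eq_starProjection.mp hP
  rw [K.norm_sq_eq_add_norm_sq_starProjection x, K.starProjection_orthogonal']
  simp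

theorem mul_norm_sub_apply_le_opNorm_mul_norm (hP : IsStarProjection P) {H V : E →L[𝕜] E}
    (hHP : H ∘L P = P ∘L H) {d : ℝ} {μ : 𝕜} {x : E}
    (hgap : d * ‖x - P x‖ ≤ ‖H (x - P x) - μ • (x - P x)‖) (hx : H x + V x = μ • x) :
    d * ‖x - P x‖ ≤ ‖V‖ * ‖x‖ := by
  have hcomm : H (P x) = P (H x) := congr($hHP x)
  have hVx : H (x - P x) - μ • (x - P x) = -(V x - P (V x)) := by
    rw [eq_sub_of_add_eq' hx]
    simp only [map_sub, map_smul, hcomm, smul_sub]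
    abel
  calc d * ‖x - P x‖ ≤ ‖V x - P (V x)‖ := by rwa [hVx, norm_neg] at hgap
    _ ≤ ‖V x‖ := hP.norm_sub_apply_le (V x)
    _ ≤ ‖V‖ * ‖x‖ := V.le_opNorm x

theorem sub_mul_norm_sub_apply_sq_le (hP : IsStarProjection P) {W : E →L[𝕜] E}
    (hW : (W : E →ₗ[𝕜] E).IsSymmetric) {C : ℝ} {x : E} (hx : ‖x‖ = 1)
    (hUCP : C * ‖P x‖ ^ 2 ≤ re ⟪P x, W (P x)⟫_𝕜) :
    C - (C + 1 + ‖W‖) * ‖x - P x‖ ^ 2 ≤ re ⟪x, W x + W (W x)⟫_𝕜 := by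
  have hpyth := hP.norm_apply_sq_add_norm_sub_apply_sq x
  have hexpand := W.re_inner_apply_self_le hW x (P x)
  rw [hx, one_pow, ← eq_sub_iff_add_eq] at hpyth
  rw [hpyth] at hUCP
  rw [inner_add_right, map_add]
  linarith

end IsStarProjection

end

local notation "⟪" x ", " y "⟫" => @inner ℂ _ _ x y

/-- `Q` plays the role of `χ_J(H)`, and `hgap` says that `H` has no spectrum on the range of
`1 - Q` within distance `d` of `I`; `χ_I(H+V)` is the projection onto the span of the orthonormal
eigenvectors `φ j`, so that `Tr χ_I(H+V) = n` and `Tr (χ_I(H+V) X) = ∑ j, ⟪φ j, X (φ j)⟫`. -/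
theorem stmt_4_general
    {𝓗 : Type*} [NormedAddCommGroup 𝓗] [InnerProductSpace ℂ 𝓗] [CompleteSpace 𝓗]
    (H V W Q : 𝓗 →L[ℂ] 𝓗)
    (hW : IsSelfAdjoint W)
    (I : Set ℝ)
    (d : ℝ) (hd : 0 < d)
    (hQ : IsSelfAdjoint Q) (hQproj : Q ∘L Q = Q) (hQH : H ∘L Q = Q ∘L H)
    (hgap : ∀ E ∈ I, ∀ x : 𝓗,
      d * ‖x - Q x‖ ≤ ‖H (x - Q x) - (E : ℂ) • (x - Q x)‖)
    (C₂ : ℝ) (hC₂ : 0 < C₂)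
    (hUCP : ∀ x : 𝓗, C₂ * (⟪Q x, Q x⟫).re ≤ (⟪Q x, W (Q x)⟫).re)
    (n : ℕ) (φ : Fin n → 𝓗) (hφ : Orthonormal ℂ φ)
    (E : Fin n → ℝ) (hE : ∀ j, E j ∈ I)
    (heig : ∀ j, H (φ j) + V (φ j) = (E j : ℂ) • φ j)
    (hsmall : ‖V‖ < d * Real.sqrt (C₂ / (C₂ + 1 + ‖W‖))) :
    (n : ℝ) ≤ (d ^ 2 / (C₂ * d ^ 2 - ‖V‖ ^ 2 * (C₂ + 1 + ‖W‖))) *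
      (∑ j, ⟪φ j, W (φ j) + W (W (φ j))⟫).re := by
  have hP : IsStarProjection Q := ⟨hQproj, hQ⟩
  have hc : 0 < C₂ + 1 + ‖W‖ := by positivity
  have hD : 0 < C₂ * d ^ 2 - ‖V‖ ^ 2 * (C₂ + 1 + ‖W‖) := by
    linarith [Real.sq_mul_lt_of_lt_mul_sqrt_div (norm_nonneg V) hc hsmall]
  have key (j : Fin n) : C₂ * d ^ 2 - ‖V‖ ^ 2 * (C₂ + 1 + ‖W‖) ≤
      d ^ 2 * (⟪φ j, W (φ j) + W (W (φ j))⟫).re := by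
    have hleak := hP.mul_norm_sub_apply_le_opNorm_mul_norm hQH (hgap _ (hE j) _) (heig j)
    rw [hφ.1 j, mul_one] at hleak
    have hleak_sq : d ^ 2 * ‖φ j - Q (φ j)‖ ^ 2 ≤ ‖V‖ ^ 2 := by
      rw [← mul_pow]; gcongr
    have hbound := hP.sub_mul_norm_sub_apply_sq_le hW.isSymmetric (hφ.1 j)
      (by simpa only [← RCLike.re_to_complex, inner_self_eq_norm_sq] using hUCP (φ j))
    rw [RCLike.re_to_complex] at hbound
    linarith [mul_le_mul_of_nonneg_left hbound (sq_nonneg d),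
      mul_le_mul_of_nonneg_left hleak_sq hc.le]
  have hsum : (n : ℝ) * (C₂ * d ^ 2 - ‖V‖ ^ 2 * (C₂ + 1 + ‖W‖)) ≤
      d ^ 2 * (∑ j, ⟪φ j, W (φ j) + W (W (φ j))⟫).re := by
    calc (n : ℝ) * (C₂ * d ^ 2 - ‖V‖ ^ 2 * (C₂ + 1 + ‖W‖))
        = ∑ _j : Fin n, (C₂ * d ^ 2 - ‖V‖ ^ 2 * (C₂ + 1 + ‖W‖)) := by
          rw [Finset.sum_const, Finset.card_univ, Fintype.card_fin, nsmul_eq_mul]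
      _ ≤ ∑ j, d ^ 2 * (⟪φ j, W (φ j) + W (W (φ j))⟫).re := Finset.sum_le_sum fun j _ => key j
      _ = d ^ 2 * (∑ j, ⟪φ j, W (φ j) + W (W (φ j))⟫).re := by
        rw [Complex.re_sum, Finset.mul_sum]
  rw [div_mul_eq_mul_div, le_div_iff₀ hD]
  linarith

/-- abstract Wegner-type trace bound, Theorem 3 of Taeufer–Veselić:
`H` is self-adjoint and lower semibounded with purely discrete spectrum; its
restriction data are encoded as follows: `Q = χ_J(H)` is an orthogonal projection
commuting with `H` whose complement carries a spectral gap of size `d = dist(I, Jᶜ)`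
around each `E ∈ I`, and `χ_I(H+V)` is the finite-rank projection onto the span of
an orthonormal eigenbasis `φ_j` of `H+V` with eigenvalues `E_j ∈ I` (so
`Tr χ_I(H+V) = n` and `Tr(χ_I(H+V) X) = Σ_j ⟨φ_j, X φ_j⟩`). `V` is bounded
symmetric, `W` bounded positive symmetric with the UCP `χ_J(H) W χ_J(H) ≥ C₂ χ_J(H)`.
If `‖V‖ < d √(C₂/(C₂+1+‖W‖))` then
`Tr(χ_I(H+V)) ≤ C₃ Tr(χ_I(H+V)(W+W²))` with
`C₃ = d²/(C₂ d² - ‖V‖²(C₂+1+‖W‖))`. -/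
theorem stmt_4
    {𝓗 : Type*} [NormedAddCommGroup 𝓗] [InnerProductSpace ℂ 𝓗] [CompleteSpace 𝓗]
    (H V W Q : 𝓗 →L[ℂ] 𝓗)
    (hH : IsSelfAdjoint H) (hV : IsSelfAdjoint V) (hW : IsSelfAdjoint W)
    (hHbound : ∃ m : ℝ, ∀ x : 𝓗, m * ‖x‖ ^ 2 ≤ (⟪x, H x⟫).re)
    (hWpos : ∀ x : 𝓗, 0 ≤ (⟪x, W x⟫).re)
    (I J : Set ℝ) (hI : I.OrdConnected) (hJ : J.OrdConnected) (hIJ : I ⊆ J)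
    (d : ℝ) (hd : 0 < d) (hdIJ : ∀ E ∈ I, ∀ y ∉ J, d ≤ |E - y|)
    (hQ : IsSelfAdjoint Q) (hQproj : Q ∘L Q = Q) (hQH : H ∘L Q = Q ∘L H)
    (hgap : ∀ E ∈ I, ∀ x : 𝓗,
      d * ‖x - Q x‖ ≤ ‖H (x - Q x) - (E : ℂ) • (x - Q x)‖)
    (C₂ : ℝ) (hC₂ : 0 < C₂)
    (hUCP : ∀ x : 𝓗, C₂ * (⟪Q x, Q x⟫).re ≤ (⟪Q x, W (Q x)⟫).re)
    (n : ℕ) (φ : Fin n → 𝓗) (hφ : Orthonormal ℂ φ)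
    (E : Fin n → ℝ) (hE : ∀ j, E j ∈ I)
    (heig : ∀ j, H (φ j) + V (φ j) = (E j : ℂ) • φ j)
    (hsmall : ‖V‖ < d * Real.sqrt (C₂ / (C₂ + 1 + ‖W‖))) :
    (n : ℝ) ≤ (d ^ 2 / (C₂ * d ^ 2 - ‖V‖ ^ 2 * (C₂ + 1 + ‖W‖))) *
      (∑ j, ⟪φ j, W (φ j) + W (W (φ j))⟫).re :=
  stmt_4_general H V W Q hW I d hd hQ hQproj hQH hgap C₂ hC₂ hUCP n φ hφ E hE heig hsmall
end

section
/- Let H be self-adjoint with compact resolvent, P = χ_I(H+V) a finite-rank spectral projection with orthonormal eigenbasis (φ_j) and eigenvalues E_j ∈ I, Q = χ_{J^c}(H), d = dist(I, J^c) > 0, V bounded symmetric. Then Tr(P Q) = Σ_j ⟨φ_j, V (H−E_j)^{-2} Q V φ_j⟩ ≤ (‖V‖²/d²)·Tr(P). -/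
local notation "⟪" x ", " y "⟫" => @inner ℂ _ _ x y

/-- eigenfunction expansion estimate. `P = χ_I(H+V)` has
orthonormal eigenbasis `φ_j` with `(H+V)φ_j = E_j φ_j`, `E_j ∈ I`;
`Q = χ_{Jᶜ}(H)` is an orthogonal projection commuting with `H`; the reduced
resolvents `R_j = (H−E_j)⁻¹Q` satisfy `(H−E_j)R_j = Q`, `Q R_j = R_j`, are
symmetric, and `‖R_j‖ ≤ 1/d` (spectral theorem, `d = dist(I, Jᶜ)`). Then
`Tr(PQ) = Σ_j ⟨Vφ_j, R_j² Vφ_j⟩ ≤ (‖V‖²/d²)·Tr(P)` (with `Tr(P) = n`). -/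
theorem stmt_16
    {𝓗 : Type*} [NormedAddCommGroup 𝓗] [InnerProductSpace ℂ 𝓗] [CompleteSpace 𝓗]
    (H V Q : 𝓗 →L[ℂ] 𝓗)
    (hH : IsSelfAdjoint H) (hV : IsSelfAdjoint V) (hQ : IsSelfAdjoint Q)
    (hQproj : Q ∘L Q = Q) (hQH : H ∘L Q = Q ∘L H)
    (d : ℝ) (hd : 0 < d)
    (n : ℕ) (φ : Fin n → 𝓗) (hφ : Orthonormal ℂ φ)
    (E : Fin n → ℝ)
    (heig : ∀ j, H (φ j) + V (φ j) = (E j : ℂ) • φ j)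
    (R : Fin n → 𝓗 →L[ℂ] 𝓗)
    (hRsa : ∀ j, IsSelfAdjoint (R j))
    (hRres : ∀ j, H ∘L R j - (E j : ℂ) • R j = Q)
    (hRran : ∀ j, Q ∘L R j = R j)
    (hRnorm : ∀ j, ‖R j‖ ≤ 1 / d) :
    (∑ j, ⟪φ j, Q (φ j)⟫).re = (∑ j, ⟪V (φ j), (R j) ((R j) (V (φ j)))⟫).re ∧
      (∑ j, ⟪φ j, Q (φ j)⟫).re ≤ ‖V‖ ^ 2 / d ^ 2 * n := by
  have hQφ : ∀ j, Q (φ j) = -(R j (V (φ j))) := by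
    intro j
    have h1 : R j ∘L H - (E j : ℂ) • R j = Q := by
      have h := congrArg (fun A => ContinuousLinearMap.adjoint A) (hRres j)
      simp only [map_sub, ContinuousLinearMap.adjoint_comp, map_smulₛₗ,
        ContinuousLinearMap.isSelfAdjoint_iff'.mp hH,
        ContinuousLinearMap.isSelfAdjoint_iff'.mp (hRsa j),
        ContinuousLinearMap.isSelfAdjoint_iff'.mp hQ] at h
      simpa using h
    have h2 := congrArg (fun A : 𝓗 →L[ℂ] 𝓗 => A (φ j)) h1
    simp only [ContinuousLinearMap.sub_apply, ContinuousLinearMap.comp_apply,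
      ContinuousLinearMap.smul_apply] at h2
    have h3 : H (φ j) = (E j : ℂ) • φ j - V (φ j) := by
      rw [eq_sub_iff_add_eq]; exact heig j
    rw [h3, map_sub, map_smul] at h2
    rw [← h2]; abel
  have hterm : ∀ j, ⟪φ j, Q (φ j)⟫ = ⟪V (φ j), (R j) ((R j) (V (φ j)))⟫ := by
    intro j
    have e1 : ⟪φ j, Q (φ j)⟫ = ⟪Q (φ j), Q (φ j)⟫ := by
      conv_lhs => rw [← hQproj]
      rw [ContinuousLinearMap.comp_apply,
        ← ContinuousLinearMap.adjoint_inner_left,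
        ContinuousLinearMap.isSelfAdjoint_iff'.mp hQ]
    rw [e1, hQφ j, inner_neg_neg]
    nth_rewrite 1 [← ContinuousLinearMap.isSelfAdjoint_iff'.mp (hRsa j)]
    rw [ContinuousLinearMap.adjoint_inner_left]
  have hbound : ∀ j, (⟪φ j, Q (φ j)⟫).re ≤ ‖V‖ ^ 2 / d ^ 2 := by
    intro j
    have e1 : ⟪φ j, Q (φ j)⟫ = ⟪Q (φ j), Q (φ j)⟫ := by
      conv_lhs => rw [← hQproj]
      rw [ContinuousLinearMap.comp_apply,
        ← ContinuousLinearMap.adjoint_inner_left,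
        ContinuousLinearMap.isSelfAdjoint_iff'.mp hQ]
    rw [e1, hQφ j, inner_neg_neg, inner_self_eq_norm_sq_to_K (𝕜 := ℂ)]
    have hn : ‖R j (V (φ j))‖ ≤ ‖V‖ / d := by
      calc ‖R j (V (φ j))‖ ≤ ‖R j‖ * ‖V (φ j)‖ := (R j).le_opNorm _
        _ ≤ (1 / d) * (‖V‖ * ‖φ j‖) := by
            apply mul_le_mul (hRnorm j) ((V).le_opNorm _) (norm_nonneg _)
            positivity
        _ = ‖V‖ / d := by rw [hφ.1 j]; ring
    norm_cast
    calc ‖R j (V (φ j))‖ ^ 2 ≤ (‖V‖ / d) ^ 2 := by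
          apply pow_le_pow_left₀ (norm_nonneg _) hn
      _ = ‖V‖ ^ 2 / d ^ 2 := by ring
  constructor
  · congr 1
    exact Finset.sum_congr rfl fun j _ => hterm j
  · calc (∑ j, ⟪φ j, Q (φ j)⟫).re = ∑ j, (⟪φ j, Q (φ j)⟫).re := by
          rw [Complex.re_sum]
      _ ≤ ∑ j : Fin n, ‖V‖ ^ 2 / d ^ 2 := Finset.sum_le_sum fun j _ => hbound j
      _ = ‖V‖ ^ 2 / d ^ 2 * n := by simp [mul_comm]
end
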